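/- arXiv:1706.02592 — 2 statements merged into one kernel-verified Lean document; each statement's English description precedes it below -/
import Mathlib

section
/- Let X₁,…,X_{n_i} i.i.d. N_d(μ_i, Σ_i) and Y₁,…,Y_{n_r} i.i.d. N_d(μ_r, Σ_r), all independent, n_i, n_r ≥ 2, T_S symmetric. Then A₂ = (4·C(n_i,2)·C(n_r,2))⁻¹ Σ_{ℓ₁>ℓ₂} Σ_{k₁>k₂} [(X_{ℓ₁}−X_{ℓ₂})ᵀ T_S (Y_{k₁}−Y_{k₂})]² is an unbiased estimator of tr(T_S Σ_i T_S Σ_r). -/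
/-! For `ℓ₁ ≠ ℓ₂` the difference `D = X_{ℓ₁} - X_{ℓ₂}` has second-moment matrix `2 Σ_i`:
each projection `u ⬝ᵥ D` is a difference of two independent copies of `N(u ⬝ᵥ μ_i, uᵀ Σ_i u)`, so
`E (u ⬝ᵥ D)² = 2 uᵀ Σ_i u`, and polarization recovers the matrix. Likewise `T_S (Y_{k₁} - Y_{k₂})`
has second-moment matrix `2 T_S Σ_r T_S`. For independent random vectors `Z, W`, expanding
`(Z ⬝ᵥ W)²` coordinatewise gives `E (Z ⬝ᵥ W)² = tr (E[Z Zᵀ] E[W Wᵀ])`, so every summand of `A₂`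
has expectation `4 tr (T_S Σ_i T_S Σ_r)`, and the normalization divides by `4` times the number
of summands. -/

open Matrix MeasureTheory ProbabilityTheory
open scoped BigOperators

/-- `X` is a Gaussian vector with mean `μ` and covariance `S` (Cramér–Wold). -/
def IsGaussianVec {Ω : Type*} [MeasurableSpace Ω] (P : Measure Ω) {d : ℕ}
    (X : Ω → Fin d → ℝ) (μ : Fin d → ℝ) (S : Matrix (Fin d) (Fin d) ℝ) : Prop :=
  ∀ u : Fin d → ℝ,
    Measure.map (fun ω => u ⬝ᵥ X ω) P =
      gaussianReal (u ⬝ᵥ μ) (u ⬝ᵥ S.mulVec u).toNNReal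

open scoped NNReal

section GaussianReal

variable {Ω : Type*} [MeasurableSpace Ω] {P : Measure Ω} {f g : Ω → ℝ} {m : ℝ} {v : ℝ≥0}

lemma memLp_of_map_eq_gaussianReal (hf : AEMeasurable f P) (h : P.map f = gaussianReal m v)
    (p : ℝ≥0) : MemLp f p P := by
  have := memLp_id_gaussianReal (μ := m) (v := v) p
  rwa [← h, memLp_map_measure_iff aestronglyMeasurable_id hf] at this

lemma integral_of_map_eq_gaussianReal (hf : AEMeasurable f P)
    (h : P.map f = gaussianReal m v) : ∫ ω, f ω ∂P = m := by
  rw [← integral_id_gaussianReal (μ := m) (v := v), ← h, integral_map hf (by fun_prop)]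

lemma variance_of_map_eq_gaussianReal (hf : AEMeasurable f P)
    (h : P.map f = gaussianReal m v) : Var[f; P] = v := by
  rw [← variance_id_map hf, h, variance_id_gaussianReal]

lemma integral_sub_sq_of_indepFun_of_map_eq_gaussianReal [IsFiniteMeasure P]
    (hf : AEMeasurable f P) (hg : AEMeasurable g P)
    (hfG : P.map f = gaussianReal m v) (hgG : P.map g = gaussianReal m v)
    (hfg : IndepFun f g P) :
    ∫ ω, (f ω - g ω) ^ 2 ∂P = 2 * v := by
  have hf2 := memLp_of_map_eq_gaussianReal hf hfG 2
  have hg2 := memLp_of_map_eq_gaussianReal hg hgG 2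
  have hmean : ∫ ω, f ω - g ω ∂P = 0 := by
    rw [integral_sub (hf2.integrable one_le_two) (hg2.integrable one_le_two),
      integral_of_map_eq_gaussianReal hf hfG, integral_of_map_eq_gaussianReal hg hgG, sub_self]
  rw [← variance_of_integral_eq_zero (by fun_prop) hmean, variance_fun_sub hf2 hg2,
    hfg.covariance_eq_zero hf2 hg2, variance_of_map_eq_gaussianReal hf hfG,
    variance_of_map_eq_gaussianReal hg hgG]
  ring

end GaussianReal

section SecondMoment

variable {Ω ι : Type*} [MeasurableSpace Ω] {P : Measure Ω} {Z W : Ω → ι → ℝ}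

noncomputable def secondMomentMatrix (P : Measure Ω) (Z : Ω → ι → ℝ) : Matrix ι ι ℝ :=
  Matrix.of fun a c => ∫ ω, Z ω a * Z ω c ∂P

lemma dotProduct_sq_eq_sum [Fintype ι] (z w : ι → ℝ) :
    (z ⬝ᵥ w) ^ 2 = ∑ p : ι × ι, z p.1 * z p.2 * (w p.1 * w p.2) := by
  rw [sq, dotProduct, Finset.sum_mul_sum, ← Finset.sum_product']
  exact Finset.sum_congr rfl fun p _ => by ring

lemma ProbabilityTheory.IndepFun.mul_apply_mul_apply (hZW : IndepFun Z W P) (p q : ι × ι) :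
    IndepFun (fun ω => Z ω p.1 * Z ω p.2) (fun ω => W ω q.1 * W ω q.2) P :=
  hZW.comp (φ := fun z : ι → ℝ => z p.1 * z p.2) (ψ := fun w : ι → ℝ => w q.1 * w q.2)
    (by fun_prop) (by fun_prop)

lemma integrable_mul_apply_mul_apply_of_indepFun (hZW : IndepFun Z W P)
    (hZ : ∀ a, MemLp (fun ω => Z ω a) 2 P) (hW : ∀ a, MemLp (fun ω => W ω a) 2 P)
    (p q : ι × ι) : Integrable (fun ω => Z ω p.1 * Z ω p.2 * (W ω q.1 * W ω q.2)) P :=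
  (hZW.mul_apply_mul_apply p q).integrable_mul ((hZ p.1).integrable_mul (hZ p.2))
    ((hW q.1).integrable_mul (hW q.2))

lemma integrable_dotProduct_sq_of_indepFun [Fintype ι] (hZW : IndepFun Z W P)
    (hZ : ∀ a, MemLp (fun ω => Z ω a) 2 P) (hW : ∀ a, MemLp (fun ω => W ω a) 2 P) :
    Integrable (fun ω => (Z ω ⬝ᵥ W ω) ^ 2) P := by
  simp_rw [dotProduct_sq_eq_sum]
  exact integrable_finsetSum _ fun p _ =>
    integrable_mul_apply_mul_apply_of_indepFun hZW hZ hW p p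

lemma integral_dotProduct_sq_of_indepFun [Fintype ι] (hZW : IndepFun Z W P)
    (hZ : ∀ a, MemLp (fun ω => Z ω a) 2 P) (hW : ∀ a, MemLp (fun ω => W ω a) 2 P) :
    ∫ ω, (Z ω ⬝ᵥ W ω) ^ 2 ∂P = (secondMomentMatrix P Z * secondMomentMatrix P W).trace := by
  simp_rw [dotProduct_sq_eq_sum]
  rw [integral_finsetSum _ fun p _ => integrable_mul_apply_mul_apply_of_indepFun hZW hZ hW p p]
  simp only [trace, diag_apply, mul_apply, ← Finset.sum_product']
  refine Finset.sum_congr rfl fun p _ => ?_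
  rw [(hZW.mul_apply_mul_apply p p).integral_fun_mul_eq_mul_integral
    ((hZ p.1).integrable_mul (hZ p.2)).1 ((hW p.1).integrable_mul (hW p.2)).1]
  simp only [secondMomentMatrix, of_apply, mul_comm (W _ p.1)]

end SecondMoment

section GaussianVec

variable {Ω : Type*} [MeasurableSpace Ω] {P : Measure Ω} {d : ℕ} {U V : Ω → Fin d → ℝ}
  {μ : Fin d → ℝ} {S : Matrix (Fin d) (Fin d) ℝ}

lemma IsGaussianVec.mulVec {k : ℕ} (h : IsGaussianVec P U μ S) (L : Matrix (Fin k) (Fin d) ℝ) :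
    IsGaussianVec P (fun ω => L *ᵥ U ω) (L *ᵥ μ) (L * S * Lᵀ) := by
  intro u
  simp only [dotProduct_mulVec u L, h (u ᵥ* L), ← mulVec_mulVec, mulVec_transpose]

lemma IsGaussianVec.memLp_dotProduct (hU : AEMeasurable U P) (h : IsGaussianVec P U μ S)
    (u : Fin d → ℝ) (p : ℝ≥0) : MemLp (fun ω => u ⬝ᵥ U ω) p P :=
  memLp_of_map_eq_gaussianReal (by fun_prop) (h u) p

lemma IsGaussianVec.memLp_apply (hU : AEMeasurable U P) (h : IsGaussianVec P U μ S)
    (a : Fin d) (p : ℝ≥0) : MemLp (fun ω => U ω a) p P := by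
  simpa [single_dotProduct] using h.memLp_dotProduct hU (Pi.single a 1) p

lemma integral_dotProduct_sub_sq_of_isGaussianVec [IsFiniteMeasure P]
    (hU : AEMeasurable U P) (hV : AEMeasurable V P) (hS : S.PosSemidef)
    (hGU : IsGaussianVec P U μ S) (hGV : IsGaussianVec P V μ S) (hUV : IndepFun U V P)
    (u : Fin d → ℝ) :
    ∫ ω, (u ⬝ᵥ (U ω - V ω)) ^ 2 ∂P = 2 * (u ⬝ᵥ S *ᵥ u) := by
  have huS : 0 ≤ u ⬝ᵥ S *ᵥ u := by simpa using hS.dotProduct_mulVec_nonneg u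
  have huUV : IndepFun (fun ω => u ⬝ᵥ U ω) (fun ω => u ⬝ᵥ V ω) P :=
    hUV.comp (φ := (u ⬝ᵥ ·)) (ψ := (u ⬝ᵥ ·)) (by fun_prop) (by fun_prop)
  simp_rw [dotProduct_sub]
  rw [integral_sub_sq_of_indepFun_of_map_eq_gaussianReal (by fun_prop) (by fun_prop) (hGU u)
    (hGV u) huUV, Real.coe_toNNReal _ huS]

lemma secondMomentMatrix_sub_of_isGaussianVec [IsFiniteMeasure P]
    (hU : AEMeasurable U P) (hV : AEMeasurable V P) (hS : S.PosSemidef)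
    (hGU : IsGaussianVec P U μ S) (hGV : IsGaussianVec P V μ S) (hUV : IndepFun U V P) :
    secondMomentMatrix P (fun ω => U ω - V ω) = 2 • S := by
  ext a c
  have hsq : ∀ u, Integrable (fun ω => (u ⬝ᵥ (U ω - V ω)) ^ 2) P := fun u => by
    simp_rw [dotProduct_sub]
    exact ((hGU.memLp_dotProduct hU u 2).sub (hGV.memLp_dotProduct hV u 2)).integrable_sq
  have hpol : ∀ x : Fin d → ℝ, x a * x c = ((((Pi.single a 1 + Pi.single c 1) ⬝ᵥ x) ^ 2
      - (Pi.single a 1 ⬝ᵥ x) ^ 2) - (Pi.single c 1 ⬝ᵥ x) ^ 2) / 2 := by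
    intro x
    simp only [add_dotProduct, single_dotProduct]
    ring
  simp only [secondMomentMatrix, of_apply, hpol]
  rw [integral_div, integral_sub _ (hsq _), integral_sub (hsq _) (hsq _)]
  · simp only [integral_dotProduct_sub_sq_of_isGaussianVec hU hV hS hGU hGV hUV]
    simp only [mulVec_add, mulVec_single, MulOpposite.op_one, one_smul, dotProduct_add,
      add_dotProduct, single_dotProduct, col_apply, one_mul, Matrix.smul_apply, nsmul_eq_mul,
      Nat.cast_ofNat]
    have hSca : S c a = S a c := by simpa using hS.isHermitian.apply a c
    linear_combination hSca
  · exact (hsq _).sub (hsq _)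

lemma integrable_and_integral_sub_dotProduct_mulVec_sub_sq [IsFiniteMeasure P]
    {U₁ U₂ V₁ V₂ : Ω → Fin d → ℝ} {ν : Fin d → ℝ} {R : Matrix (Fin d) (Fin d) ℝ}
    (hU₁ : AEMeasurable U₁ P) (hU₂ : AEMeasurable U₂ P)
    (hV₁ : AEMeasurable V₁ P) (hV₂ : AEMeasurable V₂ P)
    (hS : S.PosSemidef) (hR : R.PosSemidef)
    (hGU₁ : IsGaussianVec P U₁ μ S) (hGU₂ : IsGaussianVec P U₂ μ S)
    (hGV₁ : IsGaussianVec P V₁ ν R) (hGV₂ : IsGaussianVec P V₂ ν R)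
    (hU : IndepFun U₁ U₂ P) (hV : IndepFun V₁ V₂ P)
    (hUV : IndepFun (fun ω => (U₁ ω, U₂ ω)) (fun ω => (V₁ ω, V₂ ω)) P)
    {T : Matrix (Fin d) (Fin d) ℝ} (hT : T.IsSymm) :
    Integrable (fun ω => ((U₁ ω - U₂ ω) ⬝ᵥ T *ᵥ (V₁ ω - V₂ ω)) ^ 2) P ∧
      ∫ ω, ((U₁ ω - U₂ ω) ⬝ᵥ T *ᵥ (V₁ ω - V₂ ω)) ^ 2 ∂P = 4 * (T * S * T * R).trace := by
  have hGTV₁ := hGV₁.mulVec T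
  have hGTV₂ := hGV₂.mulVec T
  have hTRT : (T * R * Tᵀ).PosSemidef := by simpa using hR.mul_mul_conjTranspose_same T
  have hZW : IndepFun (fun ω => U₁ ω - U₂ ω) (fun ω => T *ᵥ V₁ ω - T *ᵥ V₂ ω) P :=
    hUV.comp (φ := fun x : (Fin d → ℝ) × (Fin d → ℝ) => x.1 - x.2)
      (ψ := fun y : (Fin d → ℝ) × (Fin d → ℝ) => T *ᵥ y.1 - T *ᵥ y.2)
      (by fun_prop) (by fun_prop)
  have hZ : ∀ a, MemLp (fun ω => U₁ ω a - U₂ ω a) 2 P := fun a =>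
    (hGU₁.memLp_apply hU₁ a 2).sub (hGU₂.memLp_apply hU₂ a 2)
  have hW : ∀ a, MemLp (fun ω => (T *ᵥ V₁ ω) a - (T *ᵥ V₂ ω) a) 2 P := fun a =>
    (hGTV₁.memLp_apply (by fun_prop) a 2).sub (hGTV₂.memLp_apply (by fun_prop) a 2)
  simp_rw [mulVec_sub]
  refine ⟨integrable_dotProduct_sq_of_indepFun hZW hZ hW, ?_⟩
  rw [integral_dotProduct_sq_of_indepFun hZW hZ hW,
    secondMomentMatrix_sub_of_isGaussianVec hU₁ hU₂ hS hGU₁ hGU₂ hU,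
    secondMomentMatrix_sub_of_isGaussianVec (by fun_prop) (by fun_prop) hTRT hGTV₁ hGTV₂
      (hV.comp (φ := (T *ᵥ ·)) (ψ := (T *ᵥ ·)) (by fun_prop) (by fun_prop)), hT.eq]
  rw [smul_mul_smul_comm, trace_smul, ← Matrix.mul_assoc, ← Matrix.mul_assoc,
    trace_mul_comm _ T, ← Matrix.mul_assoc, ← Matrix.mul_assoc]
  norm_num

end GaussianVec

lemma card_filter_snd_lt_fst (n : ℕ) :
    (Finset.univ.filter fun p : Fin n × Fin n => p.2 < p.1).card = n.choose 2 := by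
  have hrow : ∀ a : Fin n, (Finset.univ.filter fun b : Fin n => b < a).card = a := fun a => by
    rw [Finset.filter_gt_eq_Iio, Fin.card_Iio]
  rw [Finset.card_filter, Fintype.sum_prod_type]
  simp_rw [← Finset.card_filter, hrow]
  rw [Fin.sum_univ_eq_sum_range (fun i => i) n, Finset.sum_range_id, Nat.choose_two_right]

lemma integral_sum_sum_of_forall_eq {Ω α β : Type*} [MeasurableSpace Ω] {P : Measure Ω}
    {s : Finset α} {t : Finset β} {f : α → β → Ω → ℝ} {c : ℝ}
    (hf : ∀ p ∈ s, ∀ q ∈ t, Integrable (f p q) P ∧ ∫ ω, f p q ω ∂P = c) :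
    ∫ ω, ∑ p ∈ s, ∑ q ∈ t, f p q ω ∂P = s.card * t.card * c := by
  rw [integral_finsetSum _ fun p hp => integrable_finsetSum _ fun q hq => (hf p hp q hq).1]
  rw [Finset.sum_congr rfl fun p hp => by
    rw [integral_finsetSum _ fun q hq => (hf p hp q hq).1,
      Finset.sum_congr rfl fun q hq => (hf p hp q hq).2]]
  simp only [Finset.sum_const, nsmul_eq_mul]
  ring

/-- The symmetrized two-sample estimator
`A₂ = (4 C(n_i,2) C(n_r,2))⁻¹ Σ_{ℓ₁>ℓ₂} Σ_{k₁>k₂} [(X_{ℓ₁}−X_{ℓ₂})ᵀ T_S (Y_{k₁}−Y_{k₂})]²`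
is unbiased for `tr(T_S Σ_i T_S Σ_r)`. -/
theorem symmetrized_cross_trace_estimator_unbiased
    {Ω : Type*} [MeasurableSpace Ω] (P : Measure Ω) [IsProbabilityMeasure P]
    {d ni nr : ℕ} (hni : 2 ≤ ni) (hnr : 2 ≤ nr)
    (X : Fin ni → Ω → Fin d → ℝ) (Y : Fin nr → Ω → Fin d → ℝ)
    (hXm : ∀ j, Measurable (X j)) (hYm : ∀ j, Measurable (Y j))
    (μi μr : Fin d → ℝ) (Si Sr : Matrix (Fin d) (Fin d) ℝ)
    (hSi : Si.PosDef) (hSr : Sr.PosDef)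
    (hGaussX : ∀ j, IsGaussianVec P (X j) μi Si)
    (hGaussY : ∀ j, IsGaussianVec P (Y j) μr Sr)
    (hIndep : iIndepFun
      (fun k : Fin ni ⊕ Fin nr => Sum.elim X Y k) P)
    (Ts : Matrix (Fin d) (Fin d) ℝ) (hTs : Ts.IsSymm)
    (A₂ : Ω → ℝ)
    (hA₂ : ∀ ω, A₂ ω = (4 * (ni.choose 2) * (nr.choose 2) : ℝ)⁻¹ *
      ∑ p ∈ Finset.univ.filter (fun p : Fin ni × Fin ni => p.2 < p.1),
        ∑ q ∈ Finset.univ.filter (fun q : Fin nr × Fin nr => q.2 < q.1),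
          ((X p.1 ω - X p.2 ω) ⬝ᵥ Ts.mulVec (Y q.1 ω - Y q.2 ω)) ^ 2) :
    (∫ ω, A₂ ω ∂P) = (Ts * Si * Ts * Sr).trace := by
  have hXYm : ∀ k, Measurable (Sum.elim X Y k) := Sum.rec hXm hYm
  have hpair := fun (p : Fin ni × Fin ni) (hp : p.2 < p.1) (q : Fin nr × Fin nr)
      (hq : q.2 < q.1) =>
    integrable_and_integral_sub_dotProduct_mulVec_sub_sq (hXm p.1).aemeasurable
      (hXm p.2).aemeasurable (hYm q.1).aemeasurable (hYm q.2).aemeasurable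
      hSi.posSemidef hSr.posSemidef (hGaussX _) (hGaussX _) (hGaussY _) (hGaussY _)
      (hIndep.indepFun (i := .inl p.1) (j := .inl p.2) (by simpa using hp.ne'))
      (hIndep.indepFun (i := .inr q.1) (j := .inr q.2) (by simpa using hq.ne'))
      (hIndep.indepFun_prodMk_prodMk hXYm (.inl p.1) (.inl p.2) (.inr q.1) (.inr q.2)
        (by simp) (by simp) (by simp) (by simp)) hTs
  simp only [hA₂]
  rw [integral_const_mul, integral_sum_sum_of_forall_eq fun p hp q hq =>
      hpair p (Finset.mem_filter.1 hp).2 q (Finset.mem_filter.1 hq).2,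
    card_filter_snd_lt_fst, card_filter_snd_lt_fst]
  have hni' : (ni.choose 2 : ℝ) ≠ 0 := by exact_mod_cast (Nat.choose_pos hni).ne'
  have hnr' : (nr.choose 2 : ℝ) ≠ 0 := by exact_mod_cast (Nat.choose_pos hnr).ne'
  field_simp
end

section
/- Let λ₁ ≥ λ₂ ≥ … ≥ λ_m ≥ 0 with not all zero and set β_s = λ_s/√(Σ_ℓ λ_ℓ²), τ = (Σ λ_ℓ³)²/(Σ λ_ℓ²)³, κ = (Σ λ_ℓ⁴)/(Σ λ_ℓ²)². Then always 0 ≤ τ ≤ 1, and along any sequence of such eigenvalue tuples (with m → ∞): β₁ → 1 ⟺ τ → 1 ⟺ κ → 1, and β₁ → 0 ⟺ τ → 0 ⟺ κ → 0. -/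
open Filter
open scoped BigOperators Topology

private lemma tendsto_zero_of_pow_tendsto_zero (f : ℕ → ℝ) (hf : ∀ n, 0 ≤ f n) (k : ℕ)
    (hk : 0 < k) (h : Tendsto (fun n => f n ^ k) atTop (𝓝 0)) :
    Tendsto f atTop (𝓝 0) := by
  have hc : ContinuousAt (fun x : ℝ => x ^ ((k : ℝ)⁻¹)) 0 :=
    Real.continuousAt_rpow_const 0 _ (Or.inr (by positivity))
  have h2 := hc.tendsto.comp h
  have h0 : (0 : ℝ) ^ ((k : ℝ)⁻¹) = 0 := Real.zero_rpow (by positivity)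
  rw [h0] at h2
  have heq : (fun x : ℝ => x ^ ((k : ℝ)⁻¹)) ∘ (fun n => f n ^ k) = f := by
    funext n
    simp only [Function.comp_apply]
    rw [← Real.rpow_natCast (f n) k, ← Real.rpow_mul (hf n),
      mul_inv_cancel₀ (by positivity : (k : ℝ) ≠ 0), Real.rpow_one]
  rwa [heq] at h2

/-- For nonnegative, decreasingly ordered eigenvalue tuples (not all zero), with
`β₁ = λ₁/√(Σ λ²)`, `τ = (Σ λ³)²/(Σ λ²)³`, `κ = (Σ λ⁴)/(Σ λ²)²`: always `0 ≤ τ ≤ 1`,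
and along any sequence of such tuples with the number of eigenvalues tending to
infinity, `β₁ → 1 ⟺ τ → 1 ⟺ κ → 1` and `β₁ → 0 ⟺ τ → 0 ⟺ κ → 0`. -/
theorem eigenvalue_condition_equivalences
    (m : ℕ → ℕ) (hm : Tendsto m atTop atTop) (hm1 : ∀ N, 0 < m N)
    (lam : (N : ℕ) → Fin (m N) → ℝ)
    (hnonneg : ∀ N s, 0 ≤ lam N s)
    (hmono : ∀ N, ∀ s t : Fin (m N), s ≤ t → lam N t ≤ lam N s)
    (hpos : ∀ N, 0 < ∑ s, (lam N s) ^ 2)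
    (β₁ τ κ : ℕ → ℝ)
    (hβ₁ : ∀ N, β₁ N = lam N ⟨0, hm1 N⟩ / Real.sqrt (∑ s, (lam N s) ^ 2))
    (hτ : ∀ N, τ N = (∑ s, (lam N s) ^ 3) ^ 2 / (∑ s, (lam N s) ^ 2) ^ 3)
    (hκ : ∀ N, κ N = (∑ s, (lam N s) ^ 4) / (∑ s, (lam N s) ^ 2) ^ 2) :
    (∀ N, 0 ≤ τ N ∧ τ N ≤ 1) ∧
    (Tendsto β₁ atTop (𝓝 1) ↔ Tendsto τ atTop (𝓝 1)) ∧
    (Tendsto τ atTop (𝓝 1) ↔ Tendsto κ atTop (𝓝 1)) ∧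
    (Tendsto β₁ atTop (𝓝 0) ↔ Tendsto τ atTop (𝓝 0)) ∧
    (Tendsto τ atTop (𝓝 0) ↔ Tendsto κ atTop (𝓝 0)) := by
  set t : ℕ → ℝ := fun N => (β₁ N) ^ 2 with ht_def
  -- basic pointwise facts
  have hL0 : ∀ N, 0 ≤ lam N ⟨0, hm1 N⟩ := fun N => hnonneg N _
  have hmax : ∀ N s, lam N s ≤ lam N ⟨0, hm1 N⟩ := fun N s =>
    hmono N ⟨0, hm1 N⟩ s (Fin.le_def.mpr (Nat.zero_le _))
  have ht_eq : ∀ N, t N = (lam N ⟨0, hm1 N⟩) ^ 2 / (∑ s, (lam N s) ^ 2) := by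
    intro N
    simp only [ht_def, hβ₁ N, div_pow, Real.sq_sqrt (hpos N).le]
  have ht0 : ∀ N, 0 ≤ t N := fun N => sq_nonneg _
  have ht1 : ∀ N, t N ≤ 1 := by
    intro N
    rw [ht_eq N, div_le_one (hpos N)]
    exact Finset.single_le_sum (f := fun s => lam N s ^ 2) (fun s _ => sq_nonneg _) (Finset.mem_univ _)
  have hβ_eq : ∀ N, β₁ N = Real.sqrt (t N) := by
    intro N
    rw [ht_eq N, Real.sqrt_div (sq_nonneg _), Real.sqrt_sq (hL0 N), hβ₁ N]
  -- τ bounds: t^3 ≤ τ ≤ t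
  have hS3l : ∀ N, (lam N ⟨0, hm1 N⟩) ^ 3 ≤ ∑ s, (lam N s) ^ 3 := fun N =>
    Finset.single_le_sum (fun s _ => pow_nonneg (hnonneg N s) 3) (Finset.mem_univ _)
  have hS3u : ∀ N, (∑ s, (lam N s) ^ 3) ≤ lam N ⟨0, hm1 N⟩ * ∑ s, (lam N s) ^ 2 := by
    intro N
    rw [Finset.mul_sum]
    refine Finset.sum_le_sum fun s _ => ?_
    calc lam N s ^ 3 = lam N s * lam N s ^ 2 := by ring
      _ ≤ lam N ⟨0, hm1 N⟩ * lam N s ^ 2 :=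
        mul_le_mul_of_nonneg_right (hmax N s) (sq_nonneg _)
  have hS3nn : ∀ N, 0 ≤ ∑ s, (lam N s) ^ 3 := fun N =>
    Finset.sum_nonneg fun s _ => pow_nonneg (hnonneg N s) 3
  have hτl : ∀ N, t N ^ 3 ≤ τ N := by
    intro N
    rw [hτ N, ht_eq N, div_pow]
    refine div_le_div_of_nonneg_right ?_ (by positivity)
    calc (lam N ⟨0, hm1 N⟩ ^ 2) ^ 3 = (lam N ⟨0, hm1 N⟩ ^ 3) ^ 2 := by ring
      _ ≤ (∑ s, (lam N s) ^ 3) ^ 2 := by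
        apply pow_le_pow_left₀ (pow_nonneg (hL0 N) 3) (hS3l N)
  have hτu : ∀ N, τ N ≤ t N := by
    intro N
    rw [hτ N, ht_eq N]
    rw [div_le_div_iff₀ (pow_pos (hpos N) 3) (hpos N)]
    calc (∑ s, (lam N s) ^ 3) ^ 2 * ∑ s, (lam N s) ^ 2
        ≤ (lam N ⟨0, hm1 N⟩ * ∑ s, (lam N s) ^ 2) ^ 2 * ∑ s, (lam N s) ^ 2 := by
          apply mul_le_mul_of_nonneg_right _ (hpos N).le
          exact pow_le_pow_left₀ (hS3nn N) (hS3u N) 2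
      _ = lam N ⟨0, hm1 N⟩ ^ 2 * (∑ s, (lam N s) ^ 2) ^ 3 := by ring
  have hτ0 : ∀ N, 0 ≤ τ N := by
    intro N; rw [hτ N]; positivity
  -- κ bounds: t^2 ≤ κ ≤ t
  have hS4l : ∀ N, (lam N ⟨0, hm1 N⟩) ^ 4 ≤ ∑ s, (lam N s) ^ 4 := fun N =>
    Finset.single_le_sum (fun s _ => pow_nonneg (hnonneg N s) 4) (Finset.mem_univ _)
  have hS4u : ∀ N, (∑ s, (lam N s) ^ 4) ≤ lam N ⟨0, hm1 N⟩ ^ 2 * ∑ s, (lam N s) ^ 2 := by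
    intro N
    rw [Finset.mul_sum]
    refine Finset.sum_le_sum fun s _ => ?_
    calc lam N s ^ 4 = lam N s ^ 2 * lam N s ^ 2 := by ring
      _ ≤ lam N ⟨0, hm1 N⟩ ^ 2 * lam N s ^ 2 :=
        mul_le_mul_of_nonneg_right (pow_le_pow_left₀ (hnonneg N s) (hmax N s) 2) (sq_nonneg _)
  have hκl : ∀ N, t N ^ 2 ≤ κ N := by
    intro N
    rw [hκ N, ht_eq N, div_pow]
    refine div_le_div_of_nonneg_right ?_ (by positivity)
    calc (lam N ⟨0, hm1 N⟩ ^ 2) ^ 2 = lam N ⟨0, hm1 N⟩ ^ 4 := by ring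
      _ ≤ _ := hS4l N
  have hκu : ∀ N, κ N ≤ t N := by
    intro N
    rw [hκ N, ht_eq N]
    rw [div_le_div_iff₀ (pow_pos (hpos N) 2) (hpos N)]
    calc (∑ s, (lam N s) ^ 4) * ∑ s, (lam N s) ^ 2
        ≤ (lam N ⟨0, hm1 N⟩ ^ 2 * ∑ s, (lam N s) ^ 2) * ∑ s, (lam N s) ^ 2 :=
          mul_le_mul_of_nonneg_right (hS4u N) (hpos N).le
      _ = lam N ⟨0, hm1 N⟩ ^ 2 * (∑ s, (lam N s) ^ 2) ^ 2 := by ring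
  have hκ0 : ∀ N, 0 ≤ κ N := by
    intro N; rw [hκ N]
    apply div_nonneg (Finset.sum_nonneg fun s _ => pow_nonneg (hnonneg N s) 4) (by positivity)
  have hβ0 : ∀ N, 0 ≤ β₁ N := fun N => by
    rw [hβ_eq N]; exact Real.sqrt_nonneg _
  -- equivalences between β₁ and t
  have hβt1 : Tendsto β₁ atTop (𝓝 1) ↔ Tendsto t atTop (𝓝 1) := by
    constructor
    · intro h
      simpa using h.pow 2
    · intro h
      have := (Real.continuous_sqrt.tendsto 1).comp h
      simp only [Real.sqrt_one] at this
      have heq : Real.sqrt ∘ t = β₁ := by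
        funext N; simp [Function.comp_apply, hβ_eq N]
      rwa [heq] at this
  have hβt0 : Tendsto β₁ atTop (𝓝 0) ↔ Tendsto t atTop (𝓝 0) := by
    constructor
    · intro h
      simpa using h.pow 2
    · intro h
      have := (Real.continuous_sqrt.tendsto 0).comp h
      simp only [Real.sqrt_zero] at this
      have heq : Real.sqrt ∘ t = β₁ := by
        funext N; simp [Function.comp_apply, hβ_eq N]
      rwa [heq] at this
  -- τ ↔ β₁
  have hβτ1 : Tendsto β₁ atTop (𝓝 1) ↔ Tendsto τ atTop (𝓝 1) := by
    constructor
    · intro h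
      have ht : Tendsto t atTop (𝓝 1) := hβt1.mp h
      have h3 : Tendsto (fun N => t N ^ 3) atTop (𝓝 1) := by simpa using ht.pow 3
      exact tendsto_of_tendsto_of_tendsto_of_le_of_le h3 tendsto_const_nhds hτl
        (fun N => (hτu N).trans (ht1 N))
    · intro h
      refine hβt1.mpr ?_
      exact tendsto_of_tendsto_of_tendsto_of_le_of_le h tendsto_const_nhds hτu ht1
  have hβκ1 : Tendsto β₁ atTop (𝓝 1) ↔ Tendsto κ atTop (𝓝 1) := by
    constructor
    · intro h
      have ht : Tendsto t atTop (𝓝 1) := hβt1.mp h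
      have h2 : Tendsto (fun N => t N ^ 2) atTop (𝓝 1) := by simpa using ht.pow 2
      exact tendsto_of_tendsto_of_tendsto_of_le_of_le h2 tendsto_const_nhds hκl
        (fun N => (hκu N).trans (ht1 N))
    · intro h
      refine hβt1.mpr ?_
      exact tendsto_of_tendsto_of_tendsto_of_le_of_le h tendsto_const_nhds hκu ht1
  have hβτ0 : Tendsto β₁ atTop (𝓝 0) ↔ Tendsto τ atTop (𝓝 0) := by
    constructor
    · intro h
      have ht : Tendsto t atTop (𝓝 0) := hβt0.mp h
      exact tendsto_of_tendsto_of_tendsto_of_le_of_le tendsto_const_nhds ht hτ0 hτu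
    · intro h
      refine hβt0.mpr ?_
      have h3 : Tendsto (fun N => t N ^ 3) atTop (𝓝 0) :=
        tendsto_of_tendsto_of_tendsto_of_le_of_le tendsto_const_nhds h
          (fun N => pow_nonneg (ht0 N) 3) hτl
      exact tendsto_zero_of_pow_tendsto_zero t ht0 3 (by norm_num) h3
  have hβκ0 : Tendsto β₁ atTop (𝓝 0) ↔ Tendsto κ atTop (𝓝 0) := by
    constructor
    · intro h
      have ht : Tendsto t atTop (𝓝 0) := hβt0.mp h
      exact tendsto_of_tendsto_of_tendsto_of_le_of_le tendsto_const_nhds ht hκ0 hκu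
    · intro h
      refine hβt0.mpr ?_
      have h2 : Tendsto (fun N => t N ^ 2) atTop (𝓝 0) :=
        tendsto_of_tendsto_of_tendsto_of_le_of_le tendsto_const_nhds h
          (fun N => pow_nonneg (ht0 N) 2) hκl
      exact tendsto_zero_of_pow_tendsto_zero t ht0 2 (by norm_num) h2
  exact ⟨fun N => ⟨hτ0 N, (hτu N).trans (ht1 N)⟩, hβτ1,
    hβτ1.symm.trans hβκ1, hβτ0, hβτ0.symm.trans hβκ0⟩
end
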